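/- arXiv:0805.3605 — 2 statements merged into one kernel-verified Lean document; each statement's English description precedes it below -/
import Mathlib

section
/- Let X, Y be finite sets, Q a type on X^n, V a conditional type from X to Y, x ∈ T_Q, and W : X → P(Y) a channel with W(y|x) > 0 whenever Q(x)V(y|x) > 0. Then for every y ∈ T_V(x), W^n(y|x) = exp(−n[D(V‖W|Q) + H(V|Q)]), where W^n(y|x) = Π_i W(yᵢ|xᵢ), D(V‖W|Q) = Σ_{x,y} Q(x)V(y|x) ln(V(y|x)/W(y|x)), and H(V|Q) = Σ_{x,y} Q(x)V(y|x) ln(1/V(y|x)). -/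
/-- Number of occurrences of `a` in the sequence `x`. -/
def occ1 {n : ℕ} {A : Type} [DecidableEq A] (x : Fin n → A) (a : A) : ℕ :=
  (Finset.univ.filter fun i => x i = a).card

/-- Number of joint occurrences of `(a, b)` in the pair of sequences `(x, y)`. -/
def occ2 {n : ℕ} {A B : Type} [DecidableEq A] [DecidableEq B]
    (x : Fin n → A) (y : Fin n → B) (a : A) (b : B) : ℕ :=
  (Finset.univ.filter fun i => x i = a ∧ y i = b).card

/-- Lemma 1.2.6 of Csiszár–Körner: for `y` in the `V`-shell of `x` (with `Q` the type of
`x` and `V` the conditional type of `y` given `x`),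
`W^n(y|x) = exp(-n (D(V‖W|Q) + H(V|Q)))`. -/
theorem channel_prob_on_shell (X Y : Type) [Fintype X] [Fintype Y]
    [DecidableEq X] [DecidableEq Y]
    (n : ℕ) (hn : 0 < n) (x : Fin n → X) (y : Fin n → Y) (W : X → Y → ℝ)
    (hW : ∀ a b, 0 < occ2 x y a b → 0 < W a b) :
    ∏ i, W (x i) (y i) =
      Real.exp (-(n : ℝ) *
        ((∑ a : X, ∑ b : Y, ((occ1 x a : ℝ) / n) * ((occ2 x y a b : ℝ) / (occ1 x a)) *
            Real.log (((occ2 x y a b : ℝ) / (occ1 x a)) / W a b)) +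
         ∑ a : X, ∑ b : Y, ((occ1 x a : ℝ) / n) * ((occ2 x y a b : ℝ) / (occ1 x a)) *
            Real.log (1 / ((occ2 x y a b : ℝ) / (occ1 x a))))) := by
  have hocc : ∀ a b, 0 < occ2 x y a b → 0 < occ1 x a := by
    intro a b h
    refine lt_of_lt_of_le h (Finset.card_le_card ?_)
    intro i hi
    simp only [occ2, occ1, Finset.mem_filter] at *
    tauto
  -- LHS as product over pairs
  have hL : ∏ i, W (x i) (y i) = ∏ a : X, ∏ b : Y, W a b ^ occ2 x y a b := by
    rw [← Finset.prod_fiberwise_of_maps_to (g := fun i => (x i, y i))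
      (fun i _ => Finset.mem_univ _) (fun i => W (x i) (y i))]
    rw [← Finset.univ_product_univ, Finset.prod_product]
    refine Finset.prod_congr rfl fun a _ => Finset.prod_congr rfl fun b _ => ?_
    rw [Finset.prod_congr rfl (fun i hi => ?_), Finset.prod_const]
    · congr 1
      simp [occ2, Prod.ext_iff]
    · simp only [Finset.mem_filter, Prod.mk.injEq] at hi
      rw [hi.2.1, hi.2.2]
  -- RHS exponent simplification
  have hE : -(n : ℝ) *
        ((∑ a : X, ∑ b : Y, ((occ1 x a : ℝ) / n) * ((occ2 x y a b : ℝ) / (occ1 x a)) *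
            Real.log (((occ2 x y a b : ℝ) / (occ1 x a)) / W a b)) +
         ∑ a : X, ∑ b : Y, ((occ1 x a : ℝ) / n) * ((occ2 x y a b : ℝ) / (occ1 x a)) *
            Real.log (1 / ((occ2 x y a b : ℝ) / (occ1 x a))))
      = ∑ a : X, ∑ b : Y, (occ2 x y a b : ℝ) * Real.log (W a b) := by
    rw [← Finset.sum_add_distrib, Finset.mul_sum]
    refine Finset.sum_congr rfl fun a _ => ?_
    rw [← Finset.sum_add_distrib, Finset.mul_sum]
    refine Finset.sum_congr rfl fun b _ => ?_
    rcases Nat.eq_zero_or_pos (occ2 x y a b) with h0 | hpos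
    · simp [h0]
    · have h1 : (0:ℝ) < occ1 x a := by exact_mod_cast hocc a b hpos
      have h2 : (0:ℝ) < occ2 x y a b := by exact_mod_cast hpos
      have hnR : (0:ℝ) < n := by exact_mod_cast hn
      have hWpos := hW a b hpos
      have hV : (0:ℝ) < (occ2 x y a b : ℝ) / occ1 x a := div_pos h2 h1
      rw [Real.log_div (ne_of_gt hV) (ne_of_gt hWpos), Real.log_div one_ne_zero (ne_of_gt hV),
        Real.log_one]
      field_simp
      ring
  rw [hL, hE, Real.exp_sum]
  refine Finset.prod_congr rfl fun a _ => ?_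
  rw [Real.exp_sum]
  refine Finset.prod_congr rfl fun b _ => ?_
  rcases Nat.eq_zero_or_pos (occ2 x y a b) with h0 | hpos
  · simp [h0]
  · rw [Real.exp_nat_mul, Real.exp_log (hW a b hpos)]
end

section
/- The set of rate triples (R_M, R_L, R_λ) ∈ ℝ₊³ for which there exist R ∈ [0, R_L] and R_J ≥ 0 satisfying R_J + R_L − R < a, R_J + R_L + R_M < b, R_M + R < c, R_L − R > R_λ, and R_L − R + R_J > R_λ + d (for fixed nonnegative constants a, b, c, d with the interpretation a = I(X̃∧Y|U), b = I(UX̃∧Y), c = I(U∧Z), d = I(X̃∧Z|U)) equals the set of triples satisfying 0 ≤ R_λ < R_L, R_λ < a − d, 0 ≤ R_M < c, R_M + R_λ < b − d, and R_M + R_L < a + min(b − a, c). -/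
/-- Fourier–Motzkin elimination of the auxiliary rates `R` and `R_J`;
a triple is `(R_M, R_L, R_λ)`, and `a = I(X̃∧Y|U)`, `b = I(UX̃∧Y)`, `c = I(U∧Z)`,
`d = I(X̃∧Z|U)` with `b ≥ a`. -/
theorem fourier_motzkin_rate_region (a b c d : ℝ)
    (ha : 0 ≤ a) (hb : 0 ≤ b) (hc : 0 ≤ c) (hd : 0 ≤ d) (hab : a ≤ b) :
    {p : ℝ × ℝ × ℝ | 0 ≤ p.1 ∧ 0 ≤ p.2.1 ∧ 0 ≤ p.2.2 ∧
      ∃ R R_J : ℝ, 0 ≤ R ∧ R ≤ p.2.1 ∧ 0 ≤ R_J ∧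
        R_J + p.2.1 - R < a ∧
        R_J + p.2.1 + p.1 < b ∧
        p.1 + R < c ∧
        p.2.2 < p.2.1 - R ∧
        p.2.2 + d < p.2.1 - R + R_J} =
    {p : ℝ × ℝ × ℝ | 0 ≤ p.2.2 ∧ p.2.2 < p.2.1 ∧
      p.2.2 < a - d ∧
      0 ≤ p.1 ∧ p.1 < c ∧
      p.1 + p.2.2 < b - d ∧
      p.1 + p.2.1 < a + min (b - a) c} := by
  ext ⟨M, L, l⟩
  simp only [Set.mem_setOf_eq]
  constructor
  · rintro ⟨hM, hL, hl, R, RJ, hR0, hRL, hRJ0, h1, h2, h3, h4, h5⟩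
    refine ⟨hl, by linarith, by linarith, hM, by linarith, by linarith, ?_⟩
    rcases min_cases (b - a) c with ⟨hmin, _⟩ | ⟨hmin, _⟩ <;> rw [hmin] <;> linarith
  · rintro ⟨hl, hlL, hla, hM, hMc, hMlb, hMLmin⟩
    have hMLb : M + L < b := by
      have := min_le_left (b - a) c; linarith
    have hMLac : M + L < a + c := by
      have := min_le_right (b - a) c; linarith
    set m := max (max l (l + d + M + L - b)) (M + L - c) with hm_def
    set u := min a L with hu_def
    have hmu : m < u := by
      rw [hm_def, hu_def]
      refine max_lt (max_lt (lt_min (by linarith) hlL) (lt_min ?_ ?_)) (lt_min ?_ ?_) <;>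
        linarith
    set t := (m + u) / 2 with ht_def
    have hmt : m < t := by rw [ht_def]; linarith
    have htu : t < u := by rw [ht_def]; linarith
    have ht_a : t < a := lt_of_lt_of_le htu (min_le_left _ _)
    have ht_L : t < L := lt_of_lt_of_le htu (min_le_right _ _)
    have ht_l : l < t := lt_of_le_of_lt (le_max_of_le_left (le_max_left _ _)) hmt
    have ht_b : l + d + M + L - b < t :=
      lt_of_le_of_lt (le_max_of_le_left (le_max_right _ _)) hmt
    have ht_c : M + L - c < t := lt_of_le_of_lt (le_max_right _ _) hmt
    set lo := max 0 (l + d - t) with hlo_def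
    set hi := min (a - t) (b - L - M) with hhi_def
    have hlohi : lo < hi := by
      rw [hlo_def, hhi_def]
      exact max_lt (lt_min (by linarith) (by linarith))
        (lt_min (by linarith) (by linarith))
    set RJ := (lo + hi) / 2 with hRJ_def
    have hloRJ : lo < RJ := by rw [hRJ_def]; linarith
    have hRJhi : RJ < hi := by rw [hRJ_def]; linarith
    have hlo0 : (0:ℝ) ≤ lo := le_max_left _ _
    have hloK : l + d - t ≤ lo := le_max_right _ _
    have hhi1 : hi ≤ a - t := min_le_left _ _
    have hhi2 : hi ≤ b - L - M := min_le_right _ _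
    refine ⟨by linarith, by linarith, by linarith, L - t, RJ, by linarith, by linarith, by linarith,
      by linarith, by linarith, by linarith, by linarith, by linarith⟩
end
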